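/- Let Ω be continuous on [0,c], positive, strictly monotonically increasing, and C² on (0,c] with Ω' > 0, Ω(0) = 0, and suppose λ = lim_{T→0⁺} Ω''Ω/(Ω')² exists with λ ≠ 1. Then Ω'(T)/Ω(T) → +∞ as T → 0⁺. -/

import Mathlib

open Filter Topology Set

/-!
Write `h = Ω' / Ω` and `r = Ω'' Ω / Ω'²`, so that `h' = h² (r - 1)`: near `0` the sign of `r - 1`,
hence the monotonicity of `h`, is fixed by whether `λ < 1` or `λ > 1`. Independently, `h` cannot be
bounded above near `0`, for `h` is the derivative of `log Ω`, which tends to `-∞` because `Ω(0) = 0`.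
If `λ > 1`, `h` is increasing and therefore bounded above by its value at a point, a contradiction.
If `λ < 1`, `h` is decreasing and unbounded, hence tends to `+∞`.
-/

section DerivSignOnIoc

variable {f f' : ℝ → ℝ} {a b : ℝ}

lemma monotoneOn_Ioc_of_hasDerivAt_nonneg (hf : ∀ x ∈ Ioc a b, HasDerivAt f (f' x) x)
    (hf' : ∀ x ∈ Ioc a b, 0 ≤ f' x) : MonotoneOn f (Ioc a b) := by
  refine monotoneOn_of_hasDerivWithinAt_nonneg (f' := f') (convex_Ioc a b)
    (fun x hx => (hf x hx).continuousAt.continuousWithinAt) (fun x hx => ?_) (fun x hx => ?_)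
    <;> rw [interior_Ioc] at hx
  · exact (hf x (Ioo_subset_Ioc_self hx)).hasDerivWithinAt
  · exact hf' x (Ioo_subset_Ioc_self hx)

lemma antitoneOn_Ioc_of_hasDerivAt_nonpos (hf : ∀ x ∈ Ioc a b, HasDerivAt f (f' x) x)
    (hf' : ∀ x ∈ Ioc a b, f' x ≤ 0) : AntitoneOn f (Ioc a b) := by
  refine antitoneOn_of_hasDerivWithinAt_nonpos (f' := f') (convex_Ioc a b)
    (fun x hx => (hf x hx).continuousAt.continuousWithinAt) (fun x hx => ?_) (fun x hx => ?_)
    <;> rw [interior_Ioc] at hx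
  · exact (hf x (Ioo_subset_Ioc_self hx)).hasDerivWithinAt
  · exact hf' x (Ioo_subset_Ioc_self hx)

end DerivSignOnIoc

lemma frequently_lt_div_of_tendsto_zero {f f' : ℝ → ℝ} {a : ℝ}
    (hf : ∀ᶠ x in 𝓝[>] a, HasDerivAt f (f' x) x) (hpos : ∀ᶠ x in 𝓝[>] a, 0 < f x)
    (hlim : Tendsto f (𝓝[>] a) (𝓝 0)) (M : ℝ) : ∃ᶠ x in 𝓝[>] a, M < f' x / f x := by
  by_contra! hbound
  obtain ⟨b, hab, hb⟩ := mem_nhdsGT_iff_exists_Ioc_subset.1 (hf.and (hpos.and hbound))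
  have hanti : AntitoneOn (fun x => Real.log (f x) - M * x) (Ioc a b) := by
    refine antitoneOn_Ioc_of_hasDerivAt_nonpos (f' := fun x => f' x / f x - M)
      (fun x hx => ?_) (fun x hx => sub_nonpos.2 (hb hx).2.2)
    simpa using ((hb hx).1.log (hb hx).2.1.ne').fun_sub ((hasDerivAt_id' x).const_mul M)
  have hbot : Tendsto (fun x => Real.log (f x) - M * x) (𝓝[>] a) atBot := by
    have hf0 : Tendsto f (𝓝[>] a) (𝓝[>] 0) := tendsto_nhdsWithin_iff.2 ⟨hlim, hpos⟩
    simpa only [sub_eq_add_neg, Function.comp_def] using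
      (Real.tendsto_log_nhdsGT_zero.comp hf0).atBot_add
        ((((continuous_const_mul M).tendsto a).mono_left nhdsWithin_le_nhds).neg)
  obtain ⟨x, hlt, hx⟩ :=
    ((hbot.eventually_lt_atBot (Real.log (f b) - M * b)).and (Ioc_mem_nhdsGT hab)).exists
  exact hlt.not_ge (hanti hx ⟨hab, le_rfl⟩ hx.2)

lemma tendsto_atTop_of_antitoneOn_Ioc {h : ℝ → ℝ} {a b : ℝ} (hab : a < b)
    (hanti : AntitoneOn h (Ioc a b)) (hfreq : ∀ M, ∃ᶠ x in 𝓝[>] a, M < h x) :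
    Tendsto h (𝓝[>] a) atTop := by
  refine tendsto_atTop.2 fun M => ?_
  obtain ⟨x, hMx, hx⟩ := ((hfreq M).and_eventually (Ioc_mem_nhdsGT hab)).exists
  filter_upwards [Ioo_mem_nhdsGT hx.1] with y hy
  exact hMx.le.trans (hanti ⟨hy.1, hy.2.le.trans hx.2⟩ hx hy.2.le)

lemma hasDerivAt_deriv_div_self {u u' u'' : ℝ → ℝ} {x : ℝ} (hu : HasDerivAt u (u' x) x)
    (hu' : HasDerivAt u' (u'' x) x) (hux : u x ≠ 0) (hu'x : u' x ≠ 0) :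
    HasDerivAt (fun y => u' y / u y) ((u' x / u x) ^ 2 * (u'' x * u x / u' x ^ 2 - 1)) x := by
  refine (hu'.div hu hux).congr_deriv ?_
  field_simp

theorem ratio_tendsto_atTop_of_vanishing_past_general
    (c : ℝ) (hc : 0 < c) (Ω Ω' Ω'' : ℝ → ℝ)
    (hcontΩ : ContinuousOn Ω (Set.Icc 0 c))
    (hderiv : ∀ T ∈ Set.Ioc (0:ℝ) c, HasDerivAt Ω (Ω' T) T)
    (hderiv' : ∀ T ∈ Set.Ioc (0:ℝ) c, HasDerivAt Ω' (Ω'' T) T)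
    (hpos : ∀ T ∈ Set.Ioc (0:ℝ) c, 0 < Ω T)
    (hpos' : ∀ T ∈ Set.Ioc (0:ℝ) c, 0 < Ω' T)
    (hzero : Ω 0 = 0)
    (lam : EReal)
    (hlam : Tendsto (fun T => ((Ω'' T * Ω T / (Ω' T) ^ 2 : ℝ) : EReal))
      (𝓝[>] (0:ℝ)) (𝓝 lam))
    (hlam1 : lam ≠ 1) :
    Tendsto (fun T => Ω' T / Ω T) (𝓝[>] (0:ℝ)) atTop := by
  have hnear : Ioc 0 c ∈ 𝓝[>] (0:ℝ) := Ioc_mem_nhdsGT hc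
  have hΩ0 : Tendsto Ω (𝓝[>] 0) (𝓝 0) := by
    simpa only [hzero] using (hcontΩ 0 ⟨le_rfl, hc.le⟩).tendsto.mono_left
      (nhdsWithin_le_of_mem (mem_of_superset hnear Ioc_subset_Icc_self))
  have hfreq : ∀ M, ∃ᶠ T in 𝓝[>] 0, M < Ω' T / Ω T :=
    frequently_lt_div_of_tendsto_zero (mem_of_superset hnear hderiv)
      (mem_of_superset hnear hpos) hΩ0
  have hratio : ∀ T ∈ Ioc 0 c, HasDerivAt (fun T => Ω' T / Ω T)
      ((Ω' T / Ω T) ^ 2 * (Ω'' T * Ω T / Ω' T ^ 2 - 1)) T := fun T hT =>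
    hasDerivAt_deriv_div_self (hderiv T hT) (hderiv' T hT) (hpos T hT).ne' (hpos' T hT).ne'
  rcases hlam1.lt_or_gt with hlt | hgt
  · obtain ⟨δ, hδ, hsub⟩ := mem_nhdsGT_iff_exists_Ioc_subset.1
      ((hlam.eventually_lt_const (hlt.trans_eq EReal.coe_one.symm)).and hnear)
    refine tendsto_atTop_of_antitoneOn_Ioc hδ
      (antitoneOn_Ioc_of_hasDerivAt_nonpos (fun T hT => hratio T (hsub hT).2) fun T hT => ?_) hfreq
    exact mul_nonpos_of_nonneg_of_nonpos (sq_nonneg _)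
      (sub_nonpos.2 (EReal.coe_lt_coe_iff.1 (hsub hT).1).le)
  · obtain ⟨δ, hδ, hsub⟩ := mem_nhdsGT_iff_exists_Ioc_subset.1
      ((hlam.eventually_const_lt (EReal.coe_one.trans_lt hgt)).and hnear)
    have hmono : MonotoneOn (fun T => Ω' T / Ω T) (Ioc 0 δ) :=
      monotoneOn_Ioc_of_hasDerivAt_nonneg (fun T hT => hratio T (hsub hT).2) fun T hT =>
        mul_nonneg (sq_nonneg _) (sub_nonneg.2 (EReal.coe_lt_coe_iff.1 (hsub hT).1).le)
    obtain ⟨T, hlt, hT⟩ := ((hfreq (Ω' δ / Ω δ)).and_eventually (Ioc_mem_nhdsGT hδ)).exists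
    exact ((hmono hT ⟨hδ, le_rfl⟩ hT.2).not_gt hlt).elim

/-- Remark B.5 (T → 0⁺ variant): if Ω is continuous on [0,c], positive,
strictly increasing and C² on (0,c] with Ω' > 0 and Ω(0) = 0, and
λ = lim_{T→0⁺} Ω''Ω/(Ω')² exists with λ ≠ 1, then Ω'/Ω → +∞ as T → 0⁺. -/
theorem ratio_tendsto_atTop_of_vanishing_past
    (c : ℝ) (hc : 0 < c) (Ω Ω' Ω'' : ℝ → ℝ)
    (hcontΩ : ContinuousOn Ω (Set.Icc 0 c))
    (hderiv : ∀ T ∈ Set.Ioc (0:ℝ) c, HasDerivAt Ω (Ω' T) T)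
    (hderiv' : ∀ T ∈ Set.Ioc (0:ℝ) c, HasDerivAt Ω' (Ω'' T) T)
    (hcont : ContinuousOn Ω'' (Set.Ioc 0 c))
    (hmono : StrictMonoOn Ω (Set.Ioc 0 c))
    (hpos : ∀ T ∈ Set.Ioc (0:ℝ) c, 0 < Ω T)
    (hpos' : ∀ T ∈ Set.Ioc (0:ℝ) c, 0 < Ω' T)
    (hzero : Ω 0 = 0)
    (lam : EReal)
    (hlam : Tendsto (fun T => ((Ω'' T * Ω T / (Ω' T) ^ 2 : ℝ) : EReal))
      (𝓝[>] (0:ℝ)) (𝓝 lam))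
    (hlam1 : lam ≠ 1) :
    Tendsto (fun T => Ω' T / Ω T) (𝓝[>] (0:ℝ)) atTop :=
  ratio_tendsto_atTop_of_vanishing_past_general c hc Ω Ω' Ω'' hcontΩ hderiv hderiv' hpos hpos' hzero
    lam hlam hlam1
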